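/- Let pq be a k-edge of S (the open half-plane left of the directed line from p to q contains exactly k points of S). Then the perpendicular bisector b_{pq} contains an unbounded ray such that every circle through p and q centered on that ray encloses exactly those k points of S in its open disk, for centers sufficiently far out; i.e., there exists T such that for all centers x on b_{pq} on the appropriate side with parameter t ≥ T, the open disk centered at x through p and q contains exactly the k points of S on the left of line pq. -/

import Mathlib

/-!
Along the ray c_t = m + t • u, the difference dist(c_t, p)² − dist(c_t, s)² is affine in t with
slope 2⟪s − p, u⟫. For u the unit left normal of pq its sign for large t is therefore the side
of line pq on which s lies, and finiteness of S makes one threshold T work for all s.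
-/

open scoped RealInnerProductSpace
open Filter

noncomputable abbrev E2 := EuclideanSpace ℝ (Fin 2)

/-- The coordinates of a point of the Euclidean plane. -/
noncomputable def coordE (x : E2) (i : Fin 2) : ℝ := (WithLp.equiv 2 (Fin 2 → ℝ)) x i

/-- The normal of the segment pq pointing into the open half-plane to the left of the
directed line from p to q. -/
noncomputable def leftNormal (p q : E2) : E2 :=
  (WithLp.equiv 2 (Fin 2 → ℝ)).symm
    ![-(coordE q 1 - coordE p 1), coordE q 0 - coordE p 0]

section RayCenters

variable {V : Type*} [NormedAddCommGroup V] [InnerProductSpace ℝ V]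

theorem dist_sq_sub_dist_sq_add_smul (m p s u : V) (t : ℝ) :
    dist (m + t • u) p ^ 2 - dist (m + t • u) s ^ 2
      = dist m p ^ 2 - dist m s ^ 2 + 2 * t * ⟪s - p, u⟫ := by
  simp only [dist_eq_norm, add_sub_right_comm m (t • u), norm_add_sq_real, inner_sub_left,
    real_inner_smul_right]
  ring

theorem eventually_dist_lt_of_inner_pos (m p s u : V) (h : 0 < ⟪s - p, u⟫) :
    ∀ᶠ t : ℝ in atTop, dist (m + t • u) s < dist (m + t • u) p := by
  have hgrow : Tendsto (fun t : ℝ => dist m p ^ 2 - dist m s ^ 2 + 2 * t * ⟪s - p, u⟫)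
      atTop atTop := by
    exact tendsto_atTop_add_const_left _ _ <|
      (tendsto_id.const_mul_atTop (by positivity : 0 < 2 * ⟪s - p, u⟫)).congr
        fun t => mul_right_comm 2 ⟪s - p, u⟫ t
  filter_upwards [hgrow.eventually_gt_atTop 0] with t ht
  rw [← dist_sq_sub_dist_sq_add_smul, sub_pos] at ht
  exact (pow_lt_pow_iff_left₀ dist_nonneg dist_nonneg two_ne_zero).1 ht

theorem eventually_dist_lt_of_inner_pos_and_dist_gt_of_inner_neg (m p s u : V) :
    ∀ᶠ t : ℝ in atTop,
      (0 < ⟪s - p, u⟫ → dist (m + t • u) s < dist (m + t • u) p)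
        ∧ (⟪s - p, u⟫ < 0 → dist (m + t • u) p < dist (m + t • u) s) := by
  refine (eventually_imp_distrib_left.2 fun h => ?_).and
    (eventually_imp_distrib_left.2 fun h => ?_)
  · exact eventually_dist_lt_of_inner_pos m p s u h
  · refine eventually_dist_lt_of_inner_pos m s p u ?_
    rwa [← neg_sub, inner_neg_left, neg_pos]

end RayCenters

theorem kedge_unbounded_ray_general (S : Finset E2) (p q : E2)
    (hpq : p ≠ q) :
    ∃ T : ℝ, ∀ t : ℝ, T ≤ t → ∀ s ∈ S, s ≠ p → s ≠ q →
      ((0 < ⟪s - p, leftNormal p q⟫ →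
          dist (midpoint ℝ p q + t • (‖q - p‖⁻¹ • leftNormal p q)) s
            < dist (midpoint ℝ p q + t • (‖q - p‖⁻¹ • leftNormal p q)) p)
        ∧ (⟪s - p, leftNormal p q⟫ < 0 →
          dist (midpoint ℝ p q + t • (‖q - p‖⁻¹ • leftNormal p q)) p
            < dist (midpoint ℝ p q + t • (‖q - p‖⁻¹ • leftNormal p q)) s)) := by
  have hscale : 0 < ‖q - p‖⁻¹ := inv_pos.2 (norm_pos_iff.2 (sub_ne_zero.2 hpq.symm))
  obtain ⟨T, hT⟩ := eventually_atTop.1 <| (eventually_all_finset S).2 fun s _ =>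
    eventually_dist_lt_of_inner_pos_and_dist_gt_of_inner_neg (midpoint ℝ p q) p s
      (‖q - p‖⁻¹ • leftNormal p q)
  refine ⟨T, fun t ht s hs _ _ => ⟨fun h => (hT t ht s hs).1 ?_, fun h => (hT t ht s hs).2 ?_⟩⟩
    <;> rw [real_inner_smul_right]
  · exact mul_pos hscale h
  · exact mul_neg_of_pos_of_neg hscale h

/-- if pq is a k-edge of S, the perpendicular bisector of p and q
contains an unbounded ray (centers m + t·u, t ≥ T, where m is the midpoint of pq and
u the unit left normal) such that every circle through p and q centered on it encloses
exactly the points of S strictly to the left of line pq. -/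
theorem kedge_unbounded_ray (S : Finset E2) (p q : E2)
    (hp : p ∈ S) (hq : q ∈ S) (hpq : p ≠ q)
    (hcol : ∀ a ∈ S, ∀ b ∈ S, ∀ c ∈ S, a ≠ b → a ≠ c → b ≠ c →
      ¬ Collinear ℝ ({a, b, c} : Set E2)) :
    ∃ T : ℝ, ∀ t : ℝ, T ≤ t → ∀ s ∈ S, s ≠ p → s ≠ q →
      ((0 < ⟪s - p, leftNormal p q⟫ →
          dist (midpoint ℝ p q + t • (‖q - p‖⁻¹ • leftNormal p q)) s
            < dist (midpoint ℝ p q + t • (‖q - p‖⁻¹ • leftNormal p q)) p)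
        ∧ (⟪s - p, leftNormal p q⟫ < 0 →
          dist (midpoint ℝ p q + t • (‖q - p‖⁻¹ • leftNormal p q)) p
            < dist (midpoint ℝ p q + t • (‖q - p‖⁻¹ • leftNormal p q)) s)) :=
  kedge_unbounded_ray_general S p q hpq
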